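/- Let Φ : ℝⁿ → ℝ be a C³ convex function with Hess Φ(x) ≥ δ·I for all x ∈ ℝⁿ for some δ > 0, let u be the unique global C² solution on [0,∞) × ℝⁿ of the multidimensional Burgers system ∂u/∂t + Σ_{j=1}^n u_j ∂u/∂x_j = 0 with u(0,x) = ∇Φ(x), and let U ∈ C³([0,∞) × ℝⁿ) be a potential with u_i = ∂U/∂x_i. Then for any compact set Ω ⊆ ℝⁿ, letting Ω(t) = { α + t∇Φ(α) : α ∈ Ω } be the image of Ω under the characteristic flow at time t, one has ‖D²U(t,·)‖_{L^∞(Ω(t))} ≤ C̃₃(1+t)^{-1} and ‖D³U(t,·)‖_{L^∞(Ω(t))} ≤ C̃₄(1+t)^{-2} for all t ≥ 0, where C̃₃ and C̃₄ are constants independent of t but depending on δ and the set Ω. -/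

import Mathlib

/-- The gradient `∇Φ(x) = (∂Φ/∂x₁, …, ∂Φ/∂xₙ)(x)`. -/
noncomputable def gradFn {n : ℕ} (Φ : (Fin n → ℝ) → ℝ) (x : Fin n → ℝ) : Fin n → ℝ :=
  fun i => fderiv ℝ Φ x (Pi.single i 1)

/-- The Hessian matrix `Hess Φ(x) = (∂²Φ/∂xᵢ∂xⱼ)(x)`. -/
noncomputable def hessMat {n : ℕ} (Φ : (Fin n → ℝ) → ℝ) (x : Fin n → ℝ) :
    Matrix (Fin n) (Fin n) ℝ :=
  Matrix.of fun i j => iteratedFDeriv ℝ 2 Φ x ![Pi.single i 1, Pi.single j 1]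

/-- `u : ℝ → (Fin n → ℝ) → (Fin n → ℝ)` is a global `C^k` solution on `[0,∞) × ℝⁿ` of the
multidimensional Burgers system `∂u/∂t + ∑ⱼ uⱼ ∂u/∂xⱼ = 0` with initial data `φ`. -/
def IsGlobalSolBurgers (n : ℕ) (φ : (Fin n → ℝ) → (Fin n → ℝ)) (k : ℕ∞)
    (u : ℝ → (Fin n → ℝ) → (Fin n → ℝ)) : Prop :=
  ContDiffOn ℝ k (fun p : ℝ × (Fin n → ℝ) => u p.1 p.2) (Set.Ici 0 ×ˢ Set.univ) ∧
  (∀ x, u 0 x = φ x) ∧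
  ∀ t ∈ Set.Ici (0 : ℝ), ∀ x : Fin n → ℝ, ∀ i : Fin n,
    derivWithin (fun s => u s x i) (Set.Ici 0) t
      + ∑ j : Fin n, u t x j * fderiv ℝ (fun y => u t y i) x (Pi.single j 1) = 0

/-!
Along the characteristic map `χₜ(α) = α + t ∇Φ(α)` the solution is constant,
`u(t, χₜ α) = ∇Φ(α)`: the deviation from `∇Φ(α)` solves a linear ODE with zero initial value,
so Grönwall's inequality kills it. Hence `DU(t) ∘ χₜ = DΦ`, and differentiating once and twice,
`D²U(χₜ) ∘ Dχₜ = D²Φ` and `D³U(χₜ)(Dχₜ v, Dχₜ w) = D³Φ(v, w) - D²U(χₜ)(D²χₜ(v, w))`.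
Uniform convexity makes `Dχₜ = I + t Hess Φ` coercive with constant `1 + tδ`, so every vector is
controlled by its image up to a factor `O((1 + tδ)⁻¹)`; this yields the decay rates, the extra
factor `t` in `D²χₜ = t D²∇Φ` being absorbed by `t (1 + tδ)⁻¹ ≤ δ⁻¹`. Compactness of `Ω` bounds
the derivatives of `Φ`.
-/

open Set Function

section Coordinates

variable {ι : Type*} [Fintype ι]

theorem ContinuousLinearMap.apply_eq_sum_smul_apply_single [DecidableEq ι] {F : Type*}
    [AddCommGroup F] [Module ℝ F] [TopologicalSpace F] (φ : (ι → ℝ) →L[ℝ] F) (v : ι → ℝ) :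
    φ v = ∑ i, v i • φ (Pi.single i 1) := by
  conv_lhs => rw [pi_eq_sum_univ' v]
  simp only [map_sum, map_smul]

theorem ContinuousLinearMap.ext_single [DecidableEq ι] {F : Type*} [AddCommGroup F] [Module ℝ F]
    [TopologicalSpace F] {φ ψ : (ι → ℝ) →L[ℝ] F}
    (h : ∀ i, φ (Pi.single i 1) = ψ (Pi.single i 1)) : φ = ψ := by
  ext v
  rw [φ.apply_eq_sum_smul_apply_single, ψ.apply_eq_sum_smul_apply_single]
  simp only [h]

theorem sq_norm_le_sum_sq (v : ι → ℝ) : ‖v‖ ^ 2 ≤ ∑ i, v i ^ 2 := by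
  have hle : ‖v‖ ≤ √(∑ i, v i ^ 2) := by
    refine (pi_norm_le_iff_of_nonneg (Real.sqrt_nonneg _)).2 fun i => ?_
    rw [Real.norm_eq_abs, ← Real.sqrt_sq_eq_abs]
    exact Real.sqrt_le_sqrt
      (Finset.single_le_sum (fun j _ => sq_nonneg (v j)) (Finset.mem_univ i))
  calc ‖v‖ ^ 2 ≤ √(∑ i, v i ^ 2) ^ 2 := by gcongr
    _ = ∑ i, v i ^ 2 := Real.sq_sqrt (Finset.sum_nonneg fun i _ => sq_nonneg (v i))

theorem sum_mul_le_card_mul_norm_mul_norm (v w : ι → ℝ) :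
    ∑ i, v i * w i ≤ Fintype.card ι * (‖v‖ * ‖w‖) := by
  calc ∑ i, v i * w i ≤ ∑ _i : ι, ‖v‖ * ‖w‖ := Finset.sum_le_sum fun i _ => by
        calc v i * w i ≤ |v i * w i| := le_abs_self _
          _ = ‖v i‖ * ‖w i‖ := by rw [abs_mul, Real.norm_eq_abs, Real.norm_eq_abs]
          _ ≤ ‖v‖ * ‖w‖ := by gcongr <;> exact norm_le_pi_norm _ i
    _ = Fintype.card ι * (‖v‖ * ‖w‖) := by simp

theorem norm_le_of_coercive (A : (ι → ℝ) → ι → ℝ) {c : ℝ} (hc : 0 < c)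
    (hA : ∀ v, c * ∑ i, v i ^ 2 ≤ ∑ i, v i * A v i) (v : ι → ℝ) :
    ‖v‖ ≤ Fintype.card ι / c * ‖A v‖ := by
  have key : c * ‖v‖ ^ 2 ≤ Fintype.card ι * (‖v‖ * ‖A v‖) :=
    calc c * ‖v‖ ^ 2 ≤ c * ∑ i, v i ^ 2 := by gcongr; exact sq_norm_le_sum_sq v
      _ ≤ _ := (hA v).trans (sum_mul_le_card_mul_norm_mul_norm v (A v))
  rcases (norm_nonneg v).eq_or_lt with hv | hv
  · rw [← hv]; positivity
  · rw [div_mul_eq_mul_div, le_div_iff₀ hc]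
    nlinarith

end Coordinates

section ChainRule

variable {𝕜 : Type*} [NontriviallyNormedField 𝕜] {F G : Type*} [NormedAddCommGroup F]
  [NormedSpace 𝕜 F] [NormedAddCommGroup G] [NormedSpace 𝕜 G]

section Surjective

variable {E : Type*} [SeminormedAddCommGroup E]

theorem ContinuousLinearMap.opNorm_le_of_surjective_of_bound {T : F →L[𝕜] G} {A : E → F}
    (hA : Surjective A) {K M : ℝ} (hK : 0 ≤ K) (hM : 0 ≤ M) (hAK : ∀ v, ‖v‖ ≤ K * ‖A v‖)
    (hT : ∀ v, ‖T (A v)‖ ≤ M * ‖v‖) : ‖T‖ ≤ M * K := by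
  refine T.opNorm_le_bound (by positivity) fun w => ?_
  obtain ⟨v, rfl⟩ := hA w
  calc ‖T (A v)‖ ≤ M * ‖v‖ := hT v
    _ ≤ M * (K * ‖A v‖) := by gcongr; exact hAK v
    _ = M * K * ‖A v‖ := by ring

theorem ContinuousLinearMap.opNorm_le_of_surjective_of_bound₂ {S : F →L[𝕜] F →L[𝕜] G}
    {A : E → F} (hA : Surjective A) {K M : ℝ} (hK : 0 ≤ K) (hM : 0 ≤ M)
    (hAK : ∀ v, ‖v‖ ≤ K * ‖A v‖) (hS : ∀ v w, ‖S (A v) (A w)‖ ≤ M * ‖v‖ * ‖w‖) :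
    ‖S‖ ≤ M * K ^ 2 := by
  refine S.opNorm_le_bound₂ (by positivity) fun x y => ?_
  obtain ⟨v, rfl⟩ := hA x
  obtain ⟨w, rfl⟩ := hA y
  calc ‖S (A v) (A w)‖ ≤ M * ‖v‖ * ‖w‖ := hS v w
    _ ≤ M * (K * ‖A v‖) * (K * ‖A w‖) := by gcongr <;> apply hAK
    _ = M * K ^ 2 * ‖A v‖ * ‖A w‖ := by ring

end Surjective

variable {E : Type*} [NormedAddCommGroup E] [NormedSpace 𝕜 E]

theorem fderiv_fderiv_comp_apply {f : F → G} {g : E → F} (hf : ContDiff 𝕜 2 f)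
    (hg : ContDiff 𝕜 2 g) (x v w : E) :
    fderiv 𝕜 (fderiv 𝕜 (f ∘ g)) x v w =
      fderiv 𝕜 (fderiv 𝕜 f) (g x) (fderiv 𝕜 g x v) (fderiv 𝕜 g x w) +
        fderiv 𝕜 f (g x) (fderiv 𝕜 (fderiv 𝕜 g) x v w) := by
  have hf1 : Differentiable 𝕜 f := hf.differentiable (by norm_num)
  have hg1 : Differentiable 𝕜 g := hg.differentiable (by norm_num)
  have hf2 : Differentiable 𝕜 (fderiv 𝕜 f) :=
    (hf.fderiv_right (m := 1) le_rfl).differentiable one_ne_zero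
  have hg2 : Differentiable 𝕜 (fderiv 𝕜 g) :=
    (hg.fderiv_right (m := 1) le_rfl).differentiable one_ne_zero
  have hcomp : fderiv 𝕜 (f ∘ g) = fun y => (fderiv 𝕜 f (g y)).comp (fderiv 𝕜 g y) :=
    funext fun y => fderiv_comp y (hf1 _) (hg1 y)
  rw [hcomp, fderiv_clm_comp (c := fun y => fderiv 𝕜 f (g y)) ((hf2 _).comp x (hg1 x)) (hg2 x),
    fderiv_fun_comp x (hf2 _) (hg1 x)]
  simp only [add_apply, ContinuousLinearMap.comp_apply,
    ContinuousLinearMap.compL_apply, ContinuousLinearMap.flip_apply]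
  abel

theorem norm_fderiv_le_of_comp {f : F → G} {g : E → F} {x : E} {K : ℝ}
    (hf : DifferentiableAt 𝕜 f (g x)) (hg : DifferentiableAt 𝕜 g x)
    (hsurj : Surjective (fderiv 𝕜 g x)) (hK : 0 ≤ K) (hgK : ∀ v, ‖v‖ ≤ K * ‖fderiv 𝕜 g x v‖) :
    ‖fderiv 𝕜 f (g x)‖ ≤ ‖fderiv 𝕜 (f ∘ g) x‖ * K := by
  refine ContinuousLinearMap.opNorm_le_of_surjective_of_bound hsurj hK (norm_nonneg _) hgK
    fun v => ?_
  rw [← ContinuousLinearMap.comp_apply, ← fderiv_comp x hf hg]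
  exact (fderiv 𝕜 (f ∘ g) x).le_opNorm v

theorem norm_iteratedFDeriv_two_le_of_comp {f : F → G} {g : E → F} {x : E} {K : ℝ}
    (hf : ContDiff 𝕜 2 f) (hg : ContDiff 𝕜 2 g)
    (hsurj : Surjective (fderiv 𝕜 g x)) (hK : 0 ≤ K) (hgK : ∀ v, ‖v‖ ≤ K * ‖fderiv 𝕜 g x v‖) :
    ‖iteratedFDeriv 𝕜 2 f (g x)‖ ≤
      (‖iteratedFDeriv 𝕜 2 (f ∘ g) x‖ + ‖fderiv 𝕜 f (g x)‖ * ‖iteratedFDeriv 𝕜 2 g x‖) *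
        K ^ 2 := by
  simp only [← norm_iteratedFDeriv_fderiv (n := 1), norm_iteratedFDeriv_one]
  refine ContinuousLinearMap.opNorm_le_of_surjective_of_bound₂ hsurj hK (by positivity) hgK
    fun v w => ?_
  rw [eq_sub_of_add_eq (fderiv_fderiv_comp_apply hf hg x v w).symm]
  calc _ ≤ ‖fderiv 𝕜 (fderiv 𝕜 (f ∘ g)) x v w‖ +
          ‖fderiv 𝕜 f (g x) (fderiv 𝕜 (fderiv 𝕜 g) x v w)‖ := norm_sub_le _ _
    _ ≤ ‖fderiv 𝕜 (fderiv 𝕜 (f ∘ g)) x‖ * ‖v‖ * ‖w‖ +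
          ‖fderiv 𝕜 f (g x)‖ * (‖fderiv 𝕜 (fderiv 𝕜 g) x‖ * ‖v‖ * ‖w‖) := by
        gcongr
        · exact ContinuousLinearMap.le_opNorm₂ _ v w
        · exact (ContinuousLinearMap.le_opNorm _ _).trans
            (by gcongr; exact ContinuousLinearMap.le_opNorm₂ _ v w)
    _ = _ := by ring

end ChainRule

namespace IsGlobalSolBurgers

variable {n : ℕ} {φ : (Fin n → ℝ) → Fin n → ℝ} {k : ℕ∞} {u : ℝ → (Fin n → ℝ) → Fin n → ℝ}

theorem hasFDerivWithinAt (hu : IsGlobalSolBurgers n φ k u) (hk : 1 ≤ k) {p : ℝ × (Fin n → ℝ)}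
    (hp : p ∈ Ici 0 ×ˢ univ) :
    HasFDerivWithinAt (fun p : ℝ × (Fin n → ℝ) => u p.1 p.2)
      (fderivWithin ℝ (fun p : ℝ × (Fin n → ℝ) => u p.1 p.2) (Ici 0 ×ˢ univ) p)
      (Ici 0 ×ˢ univ) p := by
  have hk' : (1 : WithTop ℕ∞) ≤ k := by exact_mod_cast hk
  exact (hu.1.differentiableOn (zero_lt_one.trans_le hk').ne' p hp).hasFDerivWithinAt

theorem fderivWithin_apply_eq_zero (hu : IsGlobalSolBurgers n φ k u) (hk : 1 ≤ k) {s : ℝ}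
    (hs : 0 ≤ s) (x : Fin n → ℝ) :
    fderivWithin ℝ (fun p : ℝ × (Fin n → ℝ) => u p.1 p.2) (Ici 0 ×ˢ univ) (s, x) (1, u s x) =
      0 := by
  set F := fderivWithin ℝ (fun p : ℝ × (Fin n → ℝ) => u p.1 p.2) (Ici 0 ×ˢ univ) (s, x)
  have hF := hu.hasFDerivWithinAt hk (p := (s, x)) ⟨hs, mem_univ x⟩
  have htime : HasDerivWithinAt (fun s' => u s' x) (F (1, 0)) (Ici 0) s := by
    refine hF.comp_hasDerivWithinAt s
      ((hasDerivAt_id' s).prodMk (hasDerivAt_const s x)).hasDerivWithinAt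
      fun s' hs' => mk_mem_prod hs' (mem_univ x)
  have hspace : HasFDerivAt (u s) (F.comp (.inr ℝ ℝ (Fin n → ℝ))) x :=
    hasFDerivWithinAt_univ.1 <| hF.comp x (hasFDerivAt_prodMk_right s x).hasFDerivWithinAt
      fun y _ => ⟨hs, mem_univ y⟩
  funext i
  have hpde := hu.2.2 s hs x i
  rw [(hasDerivWithinAt_pi.1 htime i).derivWithin (uniqueDiffOn_Ici 0 s hs)] at hpde
  rw [(hasFDerivAt_pi'.1 hspace i).fderiv] at hpde
  have hsplit : ((1 : ℝ), u s x) = (1, 0) + ContinuousLinearMap.inr ℝ ℝ (Fin n → ℝ) (u s x) := by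
    simp
  rw [hsplit, map_add, ← ContinuousLinearMap.comp_apply,
    ContinuousLinearMap.apply_eq_sum_smul_apply_single]
  simpa [Finset.sum_apply] using hpde

theorem apply_add_smul (hu : IsGlobalSolBurgers n φ k u) (hk : 1 ≤ k) (α : Fin n → ℝ) {t : ℝ}
    (ht : 0 ≤ t) : u t (α + t • φ α) = φ α := by
  set F := fderivWithin ℝ (fun p : ℝ × (Fin n → ℝ) => u p.1 p.2) (Ici 0 ×ˢ univ)
  set γ : ℝ → ℝ × (Fin n → ℝ) := fun s => (s, α + s • φ α)
  have hγS : MapsTo γ (Ici 0) (Ici 0 ×ˢ univ) := fun s hs => mk_mem_prod hs (mem_univ _)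
  have hγ : ∀ s, HasDerivAt γ (1, φ α) s := fun s =>
    (hasDerivAt_id' s).prodMk (by simpa using ((hasDerivAt_id' s).smul_const (φ α)).const_add α)
  set L : ℝ → (Fin n → ℝ) →L[ℝ] Fin n → ℝ := fun s => -(F (γ s)).comp (.inr ℝ ℝ _)
  have hderiv : ∀ s ∈ Ico 0 t, HasDerivWithinAt (fun s => u s (α + s • φ α) - φ α)
      (L s (u s (α + s • φ α) - φ α)) (Ici s) s := by
    intro s hs
    have h := (hu.hasFDerivWithinAt hk (hγS hs.1)).comp_hasDerivWithinAt s (hγ s).hasDerivWithinAt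
      hγS
    have hsplit : ((1 : ℝ), φ α) = (1, u s (α + s • φ α))
        - ContinuousLinearMap.inr ℝ ℝ (Fin n → ℝ) (u s (α + s • φ α) - φ α) := by
      simp
    rw [hsplit, map_sub, hu.fderivWithin_apply_eq_zero hk hs.1, zero_sub] at h
    exact (h.sub_const (φ α)).mono (Ici_subset_Ici.2 hs.1)
  have hcont : ContinuousOn (fun s => u s (α + s • φ α) - φ α) (Icc 0 t) :=
    (hu.1.continuousOn.comp (by fun_prop) (hγS.mono_left Icc_subset_Ici_self)).sub
      continuousOn_const
  obtain ⟨K, hK⟩ : ∃ K, ∀ s ∈ Icc 0 t, ‖L s‖ ≤ K := by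
    have hk' : (1 : WithTop ℕ∞) ≤ k := by exact_mod_cast hk
    refine isCompact_Icc.exists_bound_of_continuousOn (ContinuousOn.neg ?_)
    refine ((hu.1.continuousOn_fderivWithin ((uniqueDiffOn_Ici 0).prod uniqueDiffOn_univ)
      hk').comp (by fun_prop) (hγS.mono_left Icc_subset_Ici_self)).clm_comp continuousOn_const
  have hzero := eq_zero_of_abs_deriv_le_mul_abs_self_of_eq_zero_right hcont hderiv
    (by simp [hu.2.1]) (fun s hs => (L s).le_of_opNorm_le (hK s (Ico_subset_Icc_self hs)) _)
    t (right_mem_Icc.2 ht)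
  exact sub_eq_zero.1 hzero

end IsGlobalSolBurgers

section Gradient

variable {n : ℕ} {Φ : (Fin n → ℝ) → ℝ}

theorem contDiff_gradFn {k m : WithTop ℕ∞} (hΦ : ContDiff ℝ m Φ) (hkm : k + 1 ≤ m) :
    ContDiff ℝ k (gradFn Φ) :=
  contDiff_pi.2 fun _ => (hΦ.fderiv_right hkm).clm_apply contDiff_const

theorem fderiv_gradFn_apply {x : Fin n → ℝ} (hΦ : DifferentiableAt ℝ (fderiv ℝ Φ) x)
    (v : Fin n → ℝ) (i : Fin n) :
    fderiv ℝ (gradFn Φ) x v i = fderiv ℝ (fderiv ℝ Φ) x v (Pi.single i 1) := by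
  have h : HasFDerivAt (gradFn Φ)
      (.pi fun i => (fderiv ℝ (fderiv ℝ Φ) x).flip (Pi.single i 1)) x :=
    hasFDerivAt_pi.2 fun i => by
      simpa [gradFn] using hΦ.hasFDerivAt.clm_apply (hasFDerivAt_const (Pi.single i (1 : ℝ)) x)
  simp [h.fderiv]

theorem sum_hessMat_mul_mul (x v : Fin n → ℝ) :
    ∑ i, ∑ j, hessMat Φ x i j * v i * v j = fderiv ℝ (fderiv ℝ Φ) x v v := by
  set B := fderiv ℝ (fderiv ℝ Φ) x
  rw [B.apply_eq_sum_smul_apply_single v, sum_apply]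
  refine Finset.sum_congr rfl fun i _ => ?_
  rw [smul_apply, (B _).apply_eq_sum_smul_apply_single v, Finset.smul_sum]
  refine Finset.sum_congr rfl fun j _ => ?_
  simp only [B, hessMat, Matrix.of_apply, iteratedFDeriv_two_apply, Matrix.cons_val_zero,
    Matrix.cons_val_one, Matrix.cons_val_fin_one, smul_eq_mul]
  ring

theorem sum_mul_fderiv_gradFn_apply {x : Fin n → ℝ} (hΦ : DifferentiableAt ℝ (fderiv ℝ Φ) x)
    (v : Fin n → ℝ) :
    ∑ i, v i * fderiv ℝ (gradFn Φ) x v i = fderiv ℝ (fderiv ℝ Φ) x v v := by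
  simp_rw [fderiv_gradFn_apply hΦ]
  rw [(fderiv ℝ (fderiv ℝ Φ) x v).apply_eq_sum_smul_apply_single v]
  simp

end Gradient

section Characteristics

variable {n : ℕ} {Φ : (Fin n → ℝ) → ℝ}

noncomputable def characteristicMap (Φ : (Fin n → ℝ) → ℝ) (t : ℝ) (α : Fin n → ℝ) : Fin n → ℝ :=
  α + t • gradFn Φ α

theorem fderiv_characteristicMap {t : ℝ} (hΦ : Differentiable ℝ (gradFn Φ)) :
    fderiv ℝ (characteristicMap Φ t) =
      fun α => ContinuousLinearMap.id ℝ _ + t • fderiv ℝ (gradFn Φ) α := by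
  funext α
  exact ((hasFDerivAt_id α).add ((hΦ α).hasFDerivAt.const_smul t)).fderiv

theorem norm_iteratedFDeriv_two_characteristicMap {t : ℝ} (ht : 0 ≤ t)
    (hΦ : ContDiff ℝ 2 (gradFn Φ)) (α : Fin n → ℝ) :
    ‖iteratedFDeriv ℝ 2 (characteristicMap Φ t) α‖ = t * ‖iteratedFDeriv ℝ 2 (gradFn Φ) α‖ := by
  simp only [← norm_iteratedFDeriv_fderiv (n := 1), norm_iteratedFDeriv_one]
  rw [fderiv_characteristicMap (hΦ.differentiable two_ne_zero), fderiv_const_add,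
    fderiv_fun_const_smul ((hΦ.fderiv_right (m := 1) le_rfl).differentiable one_ne_zero α),
    norm_smul, Real.norm_of_nonneg ht]

theorem norm_le_fderiv_characteristicMap_apply (hΦ : ContDiff ℝ 2 Φ) {δ : ℝ} (hδ : 0 ≤ δ)
    (hconv : ∀ x v : Fin n → ℝ, δ * ∑ i, v i ^ 2 ≤ ∑ i, ∑ j, hessMat Φ x i j * v i * v j)
    {t : ℝ} (ht : 0 ≤ t) (α v : Fin n → ℝ) :
    ‖v‖ ≤ n / (1 + t * δ) * ‖fderiv ℝ (characteristicMap Φ t) α v‖ := by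
  have hΦ' : DifferentiableAt ℝ (fderiv ℝ Φ) α :=
    (hΦ.fderiv_right (m := 1) le_rfl).differentiable one_ne_zero α
  have hcoer : ∀ w : Fin n → ℝ, (1 + t * δ) * ∑ i, w i ^ 2 ≤
      ∑ i, w i * fderiv ℝ (characteristicMap Φ t) α w i := fun w => by
    rw [fderiv_characteristicMap (contDiff_gradFn hΦ le_rfl |>.differentiable one_ne_zero)]
    calc (1 + t * δ) * ∑ i, w i ^ 2 = ∑ i, w i ^ 2 + t * (δ * ∑ i, w i ^ 2) := by ring
      _ ≤ ∑ i, w i ^ 2 + t * ∑ i, w i * fderiv ℝ (gradFn Φ) α w i := by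
          rw [sum_mul_fderiv_gradFn_apply hΦ', ← sum_hessMat_mul_mul]
          gcongr
          exact hconv α w
      _ = _ := by
          simp only [add_apply, smul_apply, ContinuousLinearMap.id_apply, Pi.add_apply,
            Pi.smul_apply, smul_eq_mul, mul_add, Finset.sum_add_distrib, Finset.mul_sum, sq]
          congr 1
          refine Finset.sum_congr rfl fun i _ => by ring
  simpa using norm_le_of_coercive _ (add_pos_of_pos_of_nonneg one_pos (mul_nonneg ht hδ)) hcoer v

theorem surjective_fderiv_characteristicMap (hΦ : ContDiff ℝ 2 Φ) {δ : ℝ} (hδ : 0 ≤ δ)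
    (hconv : ∀ x v : Fin n → ℝ, δ * ∑ i, v i ^ 2 ≤ ∑ i, ∑ j, hessMat Φ x i j * v i * v j)
    {t : ℝ} (ht : 0 ≤ t) (α : Fin n → ℝ) :
    Surjective (fderiv ℝ (characteristicMap Φ t) α) := by
  have hinj : Injective (fderiv ℝ (characteristicMap Φ t) α) := fun v w hvw => by
    have h := norm_le_fderiv_characteristicMap_apply hΦ hδ hconv ht α (v - w)
    rw [map_sub, hvw, sub_self, norm_zero, mul_zero, norm_le_zero_iff] at h
    exact sub_eq_zero.1 h
  exact (LinearMap.injective_iff_surjective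
    (f := (fderiv ℝ (characteristicMap Φ t) α).toLinearMap)).1 hinj

theorem contDiff_characteristicMap {k m : WithTop ℕ∞} (hΦ : ContDiff ℝ m Φ) (hkm : k + 1 ≤ m)
    (t : ℝ) : ContDiff ℝ k (characteristicMap Φ t) :=
  contDiff_id.add ((contDiff_gradFn hΦ hkm).const_smul t)

end Characteristics

section Potential

variable {n : ℕ} {Φ : (Fin n → ℝ) → ℝ} {δ t : ℝ} {V : (Fin n → ℝ) → ℝ}

theorem fderiv_comp_characteristicMap {k : ℕ∞} {u : ℝ → (Fin n → ℝ) → Fin n → ℝ}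
    (hu : IsGlobalSolBurgers n (gradFn Φ) k u) (hk : 1 ≤ k) (ht : 0 ≤ t)
    (hV : ∀ x i, u t x i = fderiv ℝ V x (Pi.single i 1)) :
    fderiv ℝ V ∘ characteristicMap Φ t = fderiv ℝ Φ := by
  funext α
  refine ContinuousLinearMap.ext_single fun i => ?_
  rw [comp_apply, ← hV, characteristicMap, hu.apply_add_smul hk α ht]
  rfl

theorem norm_iteratedFDeriv_two_characteristicMap_le (hΦ : ContDiff ℝ 3 Φ) (hδ : 0 ≤ δ)
    (hconv : ∀ x v : Fin n → ℝ, δ * ∑ i, v i ^ 2 ≤ ∑ i, ∑ j, hessMat Φ x i j * v i * v j)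
    (ht : 0 ≤ t) (hV : ContDiff ℝ 3 V) (hVΦ : fderiv ℝ V ∘ characteristicMap Φ t = fderiv ℝ Φ)
    (α : Fin n → ℝ) :
    ‖iteratedFDeriv ℝ 2 V (characteristicMap Φ t α)‖ ≤
      ‖iteratedFDeriv ℝ 2 Φ α‖ * (n / (1 + t * δ)) := by
  rw [← norm_iteratedFDeriv_fderiv, norm_iteratedFDeriv_one, ← norm_iteratedFDeriv_fderiv,
    norm_iteratedFDeriv_one, ← hVΦ]
  exact norm_fderiv_le_of_comp
    ((hV.fderiv_right (m := 2) le_rfl).differentiable two_ne_zero _)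
    ((contDiff_characteristicMap hΦ le_rfl t).differentiable two_ne_zero α)
    (surjective_fderiv_characteristicMap (hΦ.of_le (by norm_num)) hδ hconv ht α)
    (by positivity) (norm_le_fderiv_characteristicMap_apply (hΦ.of_le (by norm_num)) hδ hconv ht α)

theorem norm_iteratedFDeriv_three_characteristicMap_le (hΦ : ContDiff ℝ 3 Φ) (hδ : 0 ≤ δ)
    (hconv : ∀ x v : Fin n → ℝ, δ * ∑ i, v i ^ 2 ≤ ∑ i, ∑ j, hessMat Φ x i j * v i * v j)
    (ht : 0 ≤ t) (hV : ContDiff ℝ 3 V) (hVΦ : fderiv ℝ V ∘ characteristicMap Φ t = fderiv ℝ Φ)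
    (α : Fin n → ℝ) :
    ‖iteratedFDeriv ℝ 3 V (characteristicMap Φ t α)‖ ≤
      (‖iteratedFDeriv ℝ 3 Φ α‖ + ‖iteratedFDeriv ℝ 2 Φ α‖ * (t * (n / (1 + t * δ))) *
        ‖iteratedFDeriv ℝ 2 (gradFn Φ) α‖) * (n / (1 + t * δ)) ^ 2 := by
  have hχ : ContDiff ℝ 2 (characteristicMap Φ t) := contDiff_characteristicMap hΦ le_rfl t
  have h := norm_iteratedFDeriv_two_le_of_comp (hV.fderiv_right (m := 2) le_rfl) hχ
    (surjective_fderiv_characteristicMap (hΦ.of_le (by norm_num)) hδ hconv ht α)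
    (by positivity) (norm_le_fderiv_characteristicMap_apply (hΦ.of_le (by norm_num)) hδ hconv ht α)
  have h2 := norm_iteratedFDeriv_two_characteristicMap_le hΦ hδ hconv ht hV hVΦ α
  rw [hVΦ, norm_iteratedFDeriv_fderiv, norm_iteratedFDeriv_fderiv,
    norm_iteratedFDeriv_two_characteristicMap ht (contDiff_gradFn hΦ le_rfl)] at h
  rw [← norm_iteratedFDeriv_fderiv, norm_iteratedFDeriv_one] at h2
  calc _ ≤ _ := h
    _ ≤ (‖iteratedFDeriv ℝ 3 Φ α‖ + ‖iteratedFDeriv ℝ 2 Φ α‖ * (n / (1 + t * δ)) *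
          (t * ‖iteratedFDeriv ℝ 2 (gradFn Φ) α‖)) * (n / (1 + t * δ)) ^ 2 := by gcongr
    _ = _ := by ring

end Potential

theorem inv_one_add_mul_le {δ t : ℝ} (hδ : 0 < δ) (ht : 0 ≤ t) :
    (1 + t * δ)⁻¹ ≤ max 1 δ⁻¹ * (1 + t)⁻¹ := by
  have hc : 1 ≤ max 1 δ⁻¹ * δ :=
    calc 1 = δ⁻¹ * δ := (inv_mul_cancel₀ hδ.ne').symm
      _ ≤ max 1 δ⁻¹ * δ := by gcongr; exact le_max_right _ _
  rw [← div_eq_mul_inv, le_div_iff₀ (by positivity), inv_mul_le_iff₀ (by positivity)]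
  nlinarith [le_max_left 1 δ⁻¹, mul_le_mul_of_nonneg_left hc ht]

theorem mul_inv_one_add_mul_le {δ t : ℝ} (hδ : 0 < δ) (ht : 0 ≤ t) :
    t * (1 + t * δ)⁻¹ ≤ δ⁻¹ := by
  rw [← div_eq_mul_inv, div_le_iff₀ (by positivity), inv_mul_eq_div, le_div_iff₀ hδ]
  nlinarith

theorem IsCompact.exists_pos_bound_of_continuousOn {X E : Type*} [TopologicalSpace X]
    [SeminormedAddCommGroup E] {s : Set X} (hs : IsCompact s) {f : X → E}
    (hf : ContinuousOn f s) : ∃ C > 0, ∀ x ∈ s, ‖f x‖ ≤ C := by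
  obtain ⟨C, hC, hfC⟩ := (hs.image_of_continuousOn hf).isBounded.exists_pos_norm_le
  exact ⟨C, hC, fun x hx => hfC _ (mem_image_of_mem f hx)⟩

/-- under uniform convexity `Hess Φ ≥ δ·I`, for any compact set `Ω ⊆ ℝⁿ` the
second and third spatial derivatives of the potential `U` decay like `(1+t)⁻¹`, resp.
`(1+t)⁻²`, uniformly on the image `Ω(t) = { α + t∇Φ(α) : α ∈ Ω }` of `Ω` under the
characteristic flow. -/
theorem burgers_potential_decay_on_compact_sets
    (n : ℕ) (Φ : (Fin n → ℝ) → ℝ) (hΦ : ContDiff ℝ 3 Φ)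
    (δ : ℝ) (hδ : 0 < δ)
    (hconv : ∀ x : Fin n → ℝ, ∀ v : Fin n → ℝ,
      δ * ∑ i, v i ^ 2 ≤ ∑ i, ∑ j, hessMat Φ x i j * v i * v j)
    (u : ℝ → (Fin n → ℝ) → (Fin n → ℝ))
    (hu : IsGlobalSolBurgers n (gradFn Φ) 2 u)
    (U : ℝ → (Fin n → ℝ) → ℝ)
    (hU : ContDiffOn ℝ 3 (fun p : ℝ × (Fin n → ℝ) => U p.1 p.2) (Set.Ici 0 ×ˢ Set.univ))
    (hpot : ∀ t ∈ Set.Ici (0 : ℝ), ∀ x : Fin n → ℝ, ∀ i : Fin n,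
      u t x i = fderiv ℝ (U t) x (Pi.single i 1)) :
    ∀ Ω : Set (Fin n → ℝ), IsCompact Ω →
      ∃ C₃ > (0:ℝ), ∃ C₄ > (0:ℝ),
        ∀ t ∈ Set.Ici (0 : ℝ), ∀ α ∈ Ω,
          ‖iteratedFDeriv ℝ 2 (U t) (α + t • gradFn Φ α)‖ ≤ C₃ * (1 + t)⁻¹ ∧
          ‖iteratedFDeriv ℝ 3 (U t) (α + t • gradFn Φ α)‖ ≤ C₄ * ((1 + t) ^ 2)⁻¹ := by
  intro Ω hΩ
  obtain ⟨M₂, hM₂, hΦ₂⟩ := hΩ.exists_pos_bound_of_continuousOn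
    (hΦ.continuous_iteratedFDeriv (m := 2) (by norm_num)).continuousOn
  obtain ⟨M₃, hM₃, hΦ₃⟩ := hΩ.exists_pos_bound_of_continuousOn
    (hΦ.continuous_iteratedFDeriv (m := 3) le_rfl).continuousOn
  obtain ⟨N, hN, hgrad₂⟩ := hΩ.exists_pos_bound_of_continuousOn
    ((contDiff_gradFn hΦ le_rfl).continuous_iteratedFDeriv (m := 2) le_rfl).continuousOn
  set c := max 1 δ⁻¹
  refine ⟨M₂ * (n * c) + 1, by positivity, (M₃ + M₂ * (n * δ⁻¹) * N) * (n * c) ^ 2 + 1,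
    by positivity, fun t (ht : 0 ≤ t) α hα => ?_⟩
  have hUt : ContDiff ℝ 3 (U t) := contDiffOn_univ.1 <|
    hU.comp (contDiff_const.prodMk contDiff_id).contDiffOn fun x _ => ⟨ht, mem_univ x⟩
  have hVΦ := fderiv_comp_characteristicMap hu (by norm_num) ht (hpot t ht)
  have hK : (n : ℝ) / (1 + t * δ) ≤ n * c * (1 + t)⁻¹ := by
    rw [div_eq_mul_inv, mul_assoc]; gcongr; exact inv_one_add_mul_le hδ ht
  have htK : t * (n / (1 + t * δ)) ≤ n * δ⁻¹ := by
    rw [div_eq_mul_inv, mul_left_comm]; gcongr; exact mul_inv_one_add_mul_le hδ ht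
  constructor
  · calc _ ≤ _ := norm_iteratedFDeriv_two_characteristicMap_le hΦ hδ.le hconv ht hUt hVΦ α
      _ ≤ M₂ * (n * c) * (1 + t)⁻¹ := by rw [mul_assoc]; gcongr; exact hΦ₂ α hα
      _ ≤ _ := by gcongr; linarith
  · calc _ ≤ _ := norm_iteratedFDeriv_three_characteristicMap_le hΦ hδ.le hconv ht hUt hVΦ α
      _ ≤ (M₃ + M₂ * (n * δ⁻¹) * N) * (n * c * (1 + t)⁻¹) ^ 2 := by
          gcongr; exacts [hΦ₃ α hα, hΦ₂ α hα, hgrad₂ α hα]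
      _ ≤ _ := by rw [mul_pow, inv_pow, ← mul_assoc]; gcongr; linarith
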